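/- Assume ε ∈ {1,−1}, ξ ∉ {0, 1/6}, εξ(1−6ξ) > 0, and let λ* ∈ ℝ satisfy z(λ*)² = 1/(6εξ(1−6ξ)). Suppose 2ξλ*z(λ*) + 1 + w_m ≠ 0 and 4ξ/(2ξλ*z(λ*) + 1 + w_m) ≥ 0, and set y* = √(4ξ/(2ξλ*z(λ*) + 1 + w_m)). Then F(−6ξ·z(λ*), y*, λ*) = (0,0,0), i.e. the point 2a (fast-roll inflation) is an equilibrium of the system. -/

import Mathlib

open Polynomial Filter

/-- The factor `D(λ) = 1 − 6εξ(1−6ξ)z(λ)²` coming from the time reparametrization. -/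
noncomputable def Dfun (ε ξ : ℝ) (z : ℝ → ℝ) (l : ℝ) : ℝ :=
  1 - 6*ε*ξ*(1-6*ξ)*(z l)^2

/-- The common bracket
`B(x,y,λ) = −4/3 − 2ξλy²z(λ) + ε(1−6ξ)(1−w_m)x² + 2εξ(1−3w_m)(x+z(λ))² + (1+w_m)(1−y²)`. -/
noncomputable def Bfun (ε ξ wm : ℝ) (z : ℝ → ℝ) (x y l : ℝ) : ℝ :=
  -4/3 - 2*ξ*l*y^2*(z l) + ε*(1-6*ξ)*(1-wm)*x^2
    + 2*ε*ξ*(1-3*wm)*(x + z l)^2 + (1+wm)*(1-y^2)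

/-- First component of the vector field:
`f₁ = −(x − (ε/2)λy²)·D(λ) + (3/2)(x + 6ξz(λ))·B(x,y,λ)`. -/
noncomputable def f1 (ε ξ wm : ℝ) (z : ℝ → ℝ) (x y l : ℝ) : ℝ :=
  -(x - ε/2*l*y^2) * Dfun ε ξ z l + 3/2*(x + 6*ξ*(z l)) * Bfun ε ξ wm z x y l

/-- Second component: `f₂ = y(2 − (1/2)λx)·D(λ) + (3/2)y·B(x,y,λ)`. -/
noncomputable def f2 (ε ξ wm : ℝ) (z : ℝ → ℝ) (x y l : ℝ) : ℝ :=
  y*(2 - 1/2*l*x) * Dfun ε ξ z l + 3/2*y * Bfun ε ξ wm z x y l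

/-- Third component: `f₃ = x·D(λ)/z′(λ)`. -/
noncomputable def f3 (ε ξ : ℝ) (z : ℝ → ℝ) (x y l : ℝ) : ℝ :=
  x * Dfun ε ξ z l / deriv z l

/-- The full vector field `F(x,y,λ) = (f₁,f₂,f₃)` of the reduced cosmological system. -/
noncomputable def Fvec (ε ξ wm : ℝ) (z : ℝ → ℝ) (x y l : ℝ) : ℝ × ℝ × ℝ :=
  (f1 ε ξ wm z x y l, f2 ε ξ wm z x y l, f3 ε ξ z x y l)

/-- The effective equation-of-state parameter `w_eff(x,y,λ)`. -/
noncomputable def weff (ε ξ wm : ℝ) (z : ℝ → ℝ) (x y l : ℝ) : ℝ :=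
  (Dfun ε ξ z l)⁻¹ *
    (-1 + ε*(1-6*ξ)*(1-wm)*x^2 + 2*ε*ξ*(1-3*wm)*(x + z l)^2
      + (1+wm)*(1-y^2) - 2*ε*ξ*(1-6*ξ)*(z l)^2 - 2*ξ*l*y^2*(z l))

/-- The Jacobian matrix `J_{ij} = ∂f_i/∂(j-th variable)` of `F` at the point `(x,y,λ)`. -/
noncomputable def Jmat (ε ξ wm : ℝ) (z : ℝ → ℝ) (x y l : ℝ) :
    Matrix (Fin 3) (Fin 3) ℝ :=
  Matrix.of
    ![![deriv (fun t => f1 ε ξ wm z t y l) x,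
        deriv (fun t => f1 ε ξ wm z x t l) y,
        deriv (fun t => f1 ε ξ wm z x y t) l],
      ![deriv (fun t => f2 ε ξ wm z t y l) x,
        deriv (fun t => f2 ε ξ wm z x t l) y,
        deriv (fun t => f2 ε ξ wm z x y t) l],
      ![deriv (fun t => f3 ε ξ z t y l) x,
        deriv (fun t => f3 ε ξ z x t l) y,
        deriv (fun t => f3 ε ξ z x y t) l]]

/- On the surface `z(λ)² = 1/(6εξ(1−6ξ))` the reparametrization factor `D` vanishes, and `y*` is
chosen so that the bracket `B` vanishes at `x* = −6ξz(λ*)` as well; every component of `F` carries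
one of these two factors. -/

theorem Dfun_eq_zero_of_sq_eq_inv {ε ξ : ℝ} {z : ℝ → ℝ} {l : ℝ} (hc : 6*ε*ξ*(1-6*ξ) ≠ 0)
    (hl : (z l)^2 = 1/(6*ε*ξ*(1-6*ξ))) : Dfun ε ξ z l = 0 := by
  rw [Dfun, hl, mul_one_div_cancel hc, sub_self]

theorem Bfun_fastRoll_eq_zero {ε ξ wm : ℝ} {z : ℝ → ℝ} {y l : ℝ} (hD : Dfun ε ξ z l = 0)
    (hy : (2*ξ*l*(z l) + 1 + wm) * y^2 = 4*ξ) :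
    Bfun ε ξ wm z (-(6*ξ*(z l))) y l = 0 := by
  rw [Dfun] at hD
  rw [Bfun]
  linear_combination -hy - (6*ξ*(1-wm) + (1-6*ξ)*(1-3*wm)/3) * hD

theorem Fvec_eq_zero_of_Dfun_eq_zero_of_Bfun_eq_zero {ε ξ wm : ℝ} {z : ℝ → ℝ} {x y l : ℝ}
    (hD : Dfun ε ξ z l = 0) (hB : Bfun ε ξ wm z x y l = 0) :
    Fvec ε ξ wm z x y l = (0, 0, 0) := by
  simp only [Fvec, f1, f2, f3, hD, hB, mul_zero, zero_div, add_zero]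

theorem fastRoll_point_is_equilibrium (ε ξ wm : ℝ) (z : ℝ → ℝ) (lstar : ℝ)
    (hsign : 0 < ε*ξ*(1-6*ξ))
    (hl : (z lstar)^2 = 1/(6*ε*ξ*(1-6*ξ)))
    (hden : 2*ξ*lstar*(z lstar) + 1 + wm ≠ 0)
    (hpos : 0 ≤ 4*ξ/(2*ξ*lstar*(z lstar) + 1 + wm)) :
    Fvec ε ξ wm z (-(6*ξ*(z lstar)))
      (Real.sqrt (4*ξ/(2*ξ*lstar*(z lstar) + 1 + wm))) lstar = (0, 0, 0) := by
  have hc : 6*ε*ξ*(1-6*ξ) ≠ 0 := by nlinarith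
  have hD : Dfun ε ξ z lstar = 0 := Dfun_eq_zero_of_sq_eq_inv hc hl
  have hy : (2*ξ*lstar*(z lstar) + 1 + wm) * (Real.sqrt (4*ξ/(2*ξ*lstar*(z lstar) + 1 + wm)))^2
      = 4*ξ := by
    rw [Real.sq_sqrt hpos, mul_div_cancel₀ _ hden]
  exact Fvec_eq_zero_of_Dfun_eq_zero_of_Bfun_eq_zero hD (Bfun_fastRoll_eq_zero hD hy)
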